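/- arXiv:2303.06240 — 3 statements merged into one kernel-verified Lean document; each statement's English description precedes it below -/
import Mathlib

section
/- Let p be a prime, b ≥ 0 and a < 0 be integers. Then for all natural numbers k with p-adic valuation sufficiently large, the binomial coefficient C(a+k, b) is congruent to (-1)^b · C(b-a-1, b) modulo p. -/
/-!
`b! * C(x, b)` is the value at `x` of the integer polynomial `x (x - 1) ⋯ (x - b + 1)`, so
`k ∣ b! * (C(x + k, b) - C(x, b))` for the generalized binomial coefficients on `ℤ`. When
`p ^ (v_p(b!) + 1) ∣ k`, cancelling `b!` leaves `C(x + k, b) ≡ C(x, b) (mod p)`. At `x = a < 0`,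
upper negation gives `C(a, b) = (-1)^b C(b - a - 1, b)`.
-/

open Nat

namespace Int

theorem dvd_factorial_mul_choose_add_sub_choose (x k : ℤ) (b : ℕ) :
    k ∣ b ! * (Ring.choose (x + k) b - Ring.choose x b) := by
  have h := Polynomial.sub_dvd_eval_sub (x + k) x (descPochhammer ℤ b)
  rwa [Polynomial.eval_eq_smeval, Polynomial.eval_eq_smeval,
    Ring.descPochhammer_eq_factorial_smul_choose, Ring.descPochhammer_eq_factorial_smul_choose,
    nsmul_eq_mul, nsmul_eq_mul, ← mul_sub, add_sub_cancel_left] at h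

theorem prime_dvd_of_pow_factorization_succ_dvd_mul {p n : ℕ} (hp : p.Prime) (hn : n ≠ 0)
    {d : ℤ} (h : (p : ℤ) ^ (n.factorization p + 1) ∣ n * d) : (p : ℤ) ∣ d := by
  have hn' : (n : ℤ) = p ^ n.factorization p * (n / p ^ n.factorization p : ℕ) := by
    exact_mod_cast (Nat.ordProj_mul_ordCompl_eq_self n p).symm
  rw [hn', pow_succ, mul_assoc,
    mul_dvd_mul_iff_left (pow_ne_zero _ (by exact_mod_cast hp.ne_zero))] at h
  refine ((Nat.prime_iff_prime_int.mp hp).dvd_mul.mp h).resolve_left ?_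
  exact Int.natCast_dvd_natCast.not.mpr (Nat.not_dvd_ordCompl hp hn)

theorem choose_add_modEq_choose {p : ℕ} (hp : p.Prime) (x k : ℤ) (b : ℕ)
    (hk : (p : ℤ) ^ ((b !).factorization p + 1) ∣ k) :
    Ring.choose (x + k) b ≡ Ring.choose x b [ZMOD p] :=
  (Int.modEq_iff_dvd.mpr <| prime_dvd_of_pow_factorization_succ_dvd_mul hp
    (factorial_ne_zero b) (hk.trans (dvd_factorial_mul_choose_add_sub_choose x k b))).symm

end Int

namespace Ring

theorem choose_int_of_nonneg {x : ℤ} (hx : 0 ≤ x) (b : ℕ) :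
    Ring.choose x b = x.toNat.choose b := by
  rw [← Ring.choose_natCast, Int.toNat_of_nonneg hx]

theorem choose_int_of_neg {a : ℤ} (ha : a < 0) (b : ℕ) :
    Ring.choose a b = (-1) ^ b * ((b - a - 1).toNat.choose b : ℤ) := by
  rw [← neg_neg a, Ring.choose_neg, ← choose_int_of_nonneg (by omega), Units.smul_def,
    Int.coe_negOnePow_natCast, smul_eq_mul]
  ring_nf

end Ring

/-- Binomial congruence: for a prime `p`, `b ≥ 0` and `a < 0`, for all `k : ℕ` with
`p`-adic valuation sufficiently large, `C(a+k, b) ≡ (-1)^b * C(b-a-1, b) (mod p)`. -/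
theorem stmt_0 (p : ℕ) (hp : p.Prime) (a : ℤ) (b : ℕ) (ha : a < 0) :
    ∃ N : ℕ, ∀ k : ℕ, N < padicValNat p k →
      (((a + (k : ℤ)).toNat.choose b : ZMod p)) =
        (-1) ^ b * ((((b : ℤ) - a - 1).toNat.choose b : ZMod p)) := by
  -- the summand `(-a).toNat` forces `k > -a`, so that `(a + k).toNat` does not truncate
  refine ⟨(b !).factorization p + (-a).toNat, fun k hk => ?_⟩
  have hk0 : k ≠ 0 := by rintro rfl; simp at hk
  have hv : p ^ padicValNat p k ≤ k := Nat.le_of_dvd (Nat.pos_of_ne_zero hk0) pow_padicValNat_dvd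
  have hak : 0 ≤ a + k := by
    have := Nat.lt_pow_self (n := padicValNat p k) hp.one_lt
    omega
  have hdvd : p ^ ((b !).factorization p + 1) ∣ k :=
    (pow_dvd_pow p (by omega)).trans pow_padicValNat_dvd
  have key := Int.choose_add_modEq_choose hp a k b (by exact_mod_cast hdvd)
  rw [Ring.choose_int_of_nonneg hak, Ring.choose_int_of_neg ha] at key
  exact_mod_cast (ZMod.intCast_eq_intCast_iff _ _ p).mpr key
end

section
/- In the lambda algebra Λ over F_2, with generators λ_a (a ≥ 0) of bidegree (a, 1) subject to the Adem relations λ_a λ_b = Σ_{i} C(b−i−1, i−2a−1) λ_{a+b−i} λ_i for b > 2a, the admissible monomials λ_{i_1}⋯λ_{i_s} with 2 i_j ≥ i_{j+1} for all j form a spanning set: every monomial in the λ_a can be rewritten as an F_2-linear combination of admissible monomials. -/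
/-- The Adem relations of the mod-2 lambda algebra `Λ`: for `b > 2a`,
`λ_a λ_b = Σ_i C(b-i-1, i-2a-1) λ_{a+b-i} λ_i` (binomial coefficients mod 2; the range
of `i` is exactly where both binomial arguments are nonnegative). -/
def lambdaRel : FreeAlgebra (ZMod 2) ℕ → FreeAlgebra (ZMod 2) ℕ → Prop := fun x y =>
  ∃ a b : ℕ, 2 * a < b ∧
    x = FreeAlgebra.ι (ZMod 2) a * FreeAlgebra.ι (ZMod 2) b ∧
    y = ∑ i ∈ Finset.Icc (2 * a + 1) (b - 1),
      ((Nat.choose (b - i - 1) (i - 2 * a - 1) : ZMod 2)) •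
        (FreeAlgebra.ι (ZMod 2) (a + b - i) * FreeAlgebra.ι (ZMod 2) i)

/-- The lambda algebra `Λ` over `F_2`: the associative algebra generated by `λ_a`
(`a ≥ 0`) subject to the Adem relations. -/
abbrev LambdaAlg := RingQuot lambdaRel

/-!
Each Adem relation rewrites an inadmissible pair `λ_a λ_b` (`b > 2a`) as a sum of terms
`λ_{a+b-i} λ_i` with `i < b`, i.e. it moves weight to the left while keeping the total degree.
Hence the index-weighted sum `Σ_j j · i_j` of the monomial strictly decreases, and rewriting the
inadmissible pairs terminates in admissible monomials. Since the monomials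
span `Λ`, so do the admissible ones.
-/

theorem Algebra.span_range_prod_map_eq_top {R A X : Type*} [CommSemiring R] [Semiring A]
    [Algebra R A] {f : X → A} (h : Algebra.adjoin R (Set.range f) = ⊤) :
    Submodule.span R (Set.range fun l : List X => (l.map f).prod) = ⊤ := by
  have hclosure : (Submonoid.closure (Set.range f) : Set A) =
      Set.range fun l : List X => (l.map f).prod := by
    rw [← FreeMonoid.mrange_lift, MonoidHom.coe_mrange,
      ← FreeMonoid.ofList.surjective.range_comp]
    simp only [Function.comp_def, FreeMonoid.lift_ofList]
  rw [← hclosure, ← Algebra.adjoin_eq_span, h, Algebra.top_toSubmodule]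

theorem RingQuot.adjoin_range_mkAlgHom_ι {R X : Type*} [CommSemiring R]
    (r : FreeAlgebra R X → FreeAlgebra R X → Prop) :
    Algebra.adjoin R (Set.range fun x => mkAlgHom R r (FreeAlgebra.ι R x)) = ⊤ := by
  rw [Set.range_comp', ← AlgHom.map_adjoin, FreeAlgebra.adjoin_range_ι, Algebra.map_top,
    AlgHom.range_eq_top]
  exact mkAlgHom_surjective R r

/-- `indexWeightedSum l = Σ_j j * l_j`. -/
def indexWeightedSum : List ℕ → ℕ
  | [] => 0
  | _ :: t => t.sum + indexWeightedSum t

theorem indexWeightedSum_append (p r : List ℕ) :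
    indexWeightedSum (p ++ r) = indexWeightedSum p + p.length * r.sum + indexWeightedSum r := by
  induction p with
  | nil => simp [indexWeightedSum]
  | cons a t ih =>
    simp only [List.cons_append, indexWeightedSum, ih, List.sum_append, List.length_cons]
    ring

theorem indexWeightedSum_lt_of_shift_left {a b c d : ℕ} (h : c + d = a + b) (hd : d < b)
    (p q : List ℕ) :
    indexWeightedSum (p ++ c :: d :: q) < indexWeightedSum (p ++ a :: b :: q) := by
  simp only [indexWeightedSum_append, indexWeightedSum, List.sum_cons]
  have hsum : p.length * (c + (d + q.sum)) = p.length * (a + (b + q.sum)) := by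
    rw [← add_assoc, h, add_assoc]
  omega

namespace LambdaAlg

noncomputable def lambdaGen (a : ℕ) : LambdaAlg :=
  RingQuot.mkAlgHom (ZMod 2) lambdaRel (FreeAlgebra.ι (ZMod 2) a)

noncomputable def monomial (l : List ℕ) : LambdaAlg := (l.map lambdaGen).prod

def IsAdmissible (l : List ℕ) : Prop := l.IsChain fun i j => j ≤ 2 * i

theorem lambdaGen_mul_lambdaGen {a b : ℕ} (h : 2 * a < b) :
    lambdaGen a * lambdaGen b = ∑ i ∈ Finset.Icc (2 * a + 1) (b - 1),
      ((Nat.choose (b - i - 1) (i - 2 * a - 1) : ZMod 2)) •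
        (lambdaGen (a + b - i) * lambdaGen i) := by
  simpa [lambdaGen, map_sum, map_mul] using
    RingQuot.mkAlgHom_rel (ZMod 2) (show lambdaRel _ _ from ⟨a, b, h, rfl, rfl⟩)

theorem monomial_append_cons_cons (p q : List ℕ) (a b : ℕ) :
    monomial (p ++ a :: b :: q) = monomial p * (lambdaGen a * lambdaGen b) * monomial q := by
  simp [monomial, mul_assoc]

theorem span_range_monomial : Submodule.span (ZMod 2) (Set.range monomial) = ⊤ :=
  Algebra.span_range_prod_map_eq_top (RingQuot.adjoin_range_mkAlgHom_ι lambdaRel)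

theorem monomial_mem_span_admissible (l : List ℕ) :
    monomial l ∈ Submodule.span (ZMod 2) {m | ∃ l, IsAdmissible l ∧ m = monomial l} := by
  by_cases hl : IsAdmissible l
  · exact Submodule.subset_span ⟨l, hl, rfl⟩
  obtain ⟨a, b, p, q, hsplit, hab⟩ : ∃ a b p q, l = p ++ a :: b :: q ∧ 2 * a < b := by
    simpa [IsAdmissible, List.isChain_iff_forall_rel_of_append_cons_cons] using hl
  rw [hsplit, monomial_append_cons_cons, lambdaGen_mul_lambdaGen hab, Finset.mul_sum,
    Finset.sum_mul]
  refine Submodule.sum_mem _ fun i hi => ?_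
  rw [mul_smul_comm, smul_mul_assoc, ← monomial_append_cons_cons]
  exact Submodule.smul_mem _ _ (monomial_mem_span_admissible _)
termination_by indexWeightedSum l
decreasing_by
  rw [Finset.mem_Icc] at hi
  rw [hsplit]
  exact indexWeightedSum_lt_of_shift_left (by omega) (by omega) p q

end LambdaAlg

/-- In the lambda algebra `Λ` over `F_2`, the admissible monomials `λ_{i_1} ⋯ λ_{i_s}`
(with `2 i_j ≥ i_{j+1}` for all `j`) form a spanning set: every element (in particular
every monomial in the `λ_a`) is an `F_2`-linear combination of admissible monomials. -/
theorem stmt_10 (x : LambdaAlg) :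
    x ∈ Submodule.span (ZMod 2)
      {m : LambdaAlg | ∃ l : List ℕ, List.Chain' (fun i j => j ≤ 2 * i) l ∧
        m = (l.map fun a =>
          RingQuot.mkAlgHom (ZMod 2) lambdaRel (FreeAlgebra.ι (ZMod 2) a)).prod} := by
  have hx : x ∈ Submodule.span (ZMod 2) (Set.range LambdaAlg.monomial) := by
    rw [LambdaAlg.span_range_monomial]
    trivial
  refine Submodule.span_le.2 ?_ hx
  rintro _ ⟨l, rfl⟩
  exact LambdaAlg.monomial_mem_span_admissible l
end

section
/- Let p be an odd prime and consider the symmetric group Σ_p acting on the n-th space Lie_p of the Lie operad over a field k of characteristic p. For any tree T in the set T_{p,s} of rooted trees with p leaves and s ≥ 2 internal vertices, the stabilizer Σ_T ⊆ Σ_p of T contains a transposition; hence the coinvariants (sgn)_{Σ_T} of the sign representation vanish. -/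
/-- Rooted trees with leaves labelled by `Fin p` (presented with an ordering of children;
non-planarity is imposed by the reordering equivalence `TIso` below). -/
inductive PTree (p : ℕ) : Type where
  | leaf : Fin p → PTree p
  | node : List (PTree p) → PTree p

/-- The multiset of leaf labels of a tree. -/
def PTree.labels {p : ℕ} : PTree p → Multiset (Fin p)
  | .leaf a => {a}
  | .node ts => ((ts.attach.map fun ⟨t, _⟩ => t.labels)).sum

/-- The number of internal vertices of a tree. -/
def PTree.internalCount {p : ℕ} : PTree p → ℕ
  | .leaf _ => 0
  | .node ts => 1 + ((ts.attach.map fun ⟨t, _⟩ => t.internalCount)).sum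

/-- Every internal vertex has at least two children. -/
def PTree.arityOK {p : ℕ} : PTree p → Prop
  | .leaf _ => True
  | .node ts => 2 ≤ ts.length ∧ ((ts.attach.map fun ⟨t, _⟩ => t.arityOK).foldr And True)

/-- Relabelling the leaves of a tree by a permutation. -/
def PTree.relabel {p : ℕ} (σ : Equiv.Perm (Fin p)) : PTree p → PTree p
  | .leaf a => .leaf (σ a)
  | .node ts => .node (ts.attach.map fun ⟨t, _⟩ => t.relabel σ)

/-- One-step reordering of children (the generating moves for non-planar equality). -/
inductive Reorder (p : ℕ) : PTree p → PTree p → Prop where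
  | swap (ts us : List (PTree p)) (a b : PTree p) :
      Reorder p (.node (ts ++ a :: b :: us)) (.node (ts ++ b :: a :: us))
  | congr (ts us : List (PTree p)) (a b : PTree p) :
      Reorder p a b → Reorder p (.node (ts ++ a :: us)) (.node (ts ++ b :: us))

/-- Isomorphism of labelled rooted trees as non-planar trees: the equivalence relation
generated by reordering children. -/
def TIso (p : ℕ) : PTree p → PTree p → Prop :=
  Relation.EqvGen (Reorder p)

/-!
A lowest internal vertex of `T` (one all of whose children are leaves) has two leaf children
`a` and `b`. Relabelling by the transposition `(a b)` merely reorders the children of that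
vertex and fixes every other leaf, so `(a b)` stabilises `T` as a non-planar tree. Its sign is
`-1`, so the coinvariants of `sgn` are killed by `c - (-c) = 2c`, and `2` is invertible since
`p` is odd.
-/

theorem List.foldr_and_map_iff {α : Type*} (l : List α) (f : α → Prop) :
    (l.map f).foldr And True ↔ ∀ x ∈ l, f x := by
  induction l with
  | nil => simp
  | cons x l ih => simp [ih]

theorem TIso.node_append_cons {p : ℕ} (l₁ l₂ : List (PTree p)) {a b : PTree p} (h : TIso p a b) :
    TIso p (.node (l₁ ++ a :: l₂)) (.node (l₁ ++ b :: l₂)) := by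
  induction h with
  | rel x y h => exact .rel _ _ (.congr l₁ l₂ x y h)
  | refl x => exact .refl _
  | symm x y _ ih => exact .symm _ _ ih
  | trans x y z _ _ ih₁ ih₂ => exact .trans _ _ _ ih₁ ih₂

namespace PTree

variable {p : ℕ}

@[elab_as_elim]
theorem induction_on {motive : PTree p → Prop} (T : PTree p)
    (leaf : ∀ a, motive (.leaf a))
    (node : ∀ ts, (∀ t ∈ ts, motive t) → motive (.node ts)) : motive T :=
  PTree.rec (motive_2 := fun ts => ∀ t ∈ ts, motive t) leaf node (by simp)
    (fun t ts ht hts => by simpa [ht] using hts) T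

theorem labels_leaf (a : Fin p) : (leaf a).labels = {a} := by
  rw [labels]

theorem labels_node (ts : List (PTree p)) :
    (node ts).labels = (ts.map labels).sum := by
  rw [labels, List.attach_map_val]

theorem labels_node_cons (t : PTree p) (ts : List (PTree p)) :
    (node (t :: ts)).labels = t.labels + (node ts).labels := by
  simp only [labels_node, List.map_cons, List.sum_cons]

theorem labels_node_append_cons (l₁ l₂ : List (PTree p)) (t : PTree p) :
    (node (l₁ ++ t :: l₂)).labels = t.labels + (node (l₁ ++ l₂)).labels := by
  simp only [labels_node, List.map_append, List.map_cons, List.sum_append, List.sum_cons]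
  exact add_left_comm _ _ _

theorem labels_le_of_mem {ts : List (PTree p)} {t : PTree p} (ht : t ∈ ts) :
    t.labels ≤ (node ts).labels := by
  rw [labels_node]
  exact List.le_sum_of_mem (List.mem_map_of_mem ht)

theorem relabel_node (σ : Equiv.Perm (Fin p)) (ts : List (PTree p)) :
    (node ts).relabel σ = .node (ts.map (relabel σ)) := by
  rw [relabel, List.attach_map_val]

theorem arityOK_node_iff {ts : List (PTree p)} :
    (node ts).arityOK ↔ 2 ≤ ts.length ∧ ∀ t ∈ ts, t.arityOK := by
  rw [arityOK, List.attach_map_val (f := arityOK), List.foldr_and_map_iff]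

theorem relabel_eq_self {σ : Equiv.Perm (Fin p)} (T : PTree p)
    (hσ : ∀ c ∈ T.labels, σ c = c) : T.relabel σ = T := by
  induction T using induction_on with
  | leaf a => simp [relabel, hσ a (by simp [labels_leaf])]
  | node ts ih =>
    rw [relabel_node, List.map_congr_left (g := id), List.map_id]
    exact fun t ht => ih t ht fun c hc => hσ c (Multiset.mem_of_le (labels_le_of_mem ht) hc)

theorem map_relabel_eq_self {σ : Equiv.Perm (Fin p)} {ts : List (PTree p)}
    (hσ : ∀ c ∈ (node ts).labels, σ c = c) : ts.map (relabel σ) = ts := by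
  simpa [relabel_node] using relabel_eq_self (node ts) hσ

theorem relabel_node_append_cons {σ : Equiv.Perm (Fin p)} {l₁ l₂ : List (PTree p)}
    (hσ : ∀ c ∈ (node (l₁ ++ l₂)).labels, σ c = c) (t : PTree p) :
    (node (l₁ ++ t :: l₂)).relabel σ = node (l₁ ++ t.relabel σ :: l₂) := by
  obtain ⟨h₁, h₂⟩ := List.append_inj (by simpa using map_relabel_eq_self hσ) (List.length_map _)
  rw [relabel_node, List.map_append, List.map_cons, h₁, h₂]

theorem exists_swap_relabel_tIso (T : PTree p) (hnd : T.labels.Nodup) (har : T.arityOK)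
    (hT : 0 < T.internalCount) :
    ∃ a ∈ T.labels, ∃ b ∈ T.labels, a ≠ b ∧ TIso p (T.relabel (Equiv.swap a b)) T := by
  induction T using induction_on with
  | leaf a => simp [internalCount] at hT
  | node ts ih =>
    rw [arityOK_node_iff] at har
    by_cases hleaves : ∀ t ∈ ts, ∃ c, t = leaf c
    · obtain ⟨t₁, t₂, rest, rfl⟩ : ∃ t₁ t₂ rest, ts = t₁ :: t₂ :: rest := by
        match ts, har.1 with
        | t₁ :: t₂ :: rest, _ => exact ⟨t₁, t₂, rest, rfl⟩
      obtain ⟨a, rfl⟩ := hleaves t₁ (by simp)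
      obtain ⟨b, rfl⟩ := hleaves t₂ (by simp)
      rw [labels_node_cons, labels_node_cons] at hnd ⊢
      simp only [labels_leaf, Multiset.singleton_add, Multiset.nodup_cons, Multiset.mem_cons,
        not_or] at hnd
      obtain ⟨⟨hab, ha⟩, hb, -⟩ := hnd
      refine ⟨a, by simp [labels_leaf], b, by simp [labels_leaf], hab, ?_⟩
      rw [relabel_node, List.map_cons, List.map_cons, map_relabel_eq_self fun c hc =>
        Equiv.swap_apply_of_ne_of_ne (ne_of_mem_of_not_mem hc ha) (ne_of_mem_of_not_mem hc hb)]
      simpa [relabel] using .rel _ _ (Reorder.swap [] rest (leaf b) (leaf a))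
    · push Not at hleaves
      obtain ⟨t, ht, ht_node⟩ := hleaves
      obtain ⟨l₁, l₂, rfl⟩ := List.append_of_mem ht
      rw [labels_node_append_cons] at hnd ⊢
      obtain ⟨hnd_t, -, hdisj⟩ := Multiset.nodup_add.mp hnd
      have ht_pos : 0 < t.internalCount := by
        cases t with
        | leaf c => exact absurd rfl (ht_node c)
        | node us => simp [internalCount]
      obtain ⟨a, ha, b, hb, hab, hiso⟩ := ih t ht hnd_t (har.2 t ht) ht_pos
      refine ⟨a, Multiset.mem_add.mpr (.inl ha), b, Multiset.mem_add.mpr (.inl hb), hab, ?_⟩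
      rw [relabel_node_append_cons fun c hc => Equiv.swap_apply_of_ne_of_ne
        (ne_of_mem_of_not_mem hc (Multiset.disjoint_left.mp hdisj ha))
        (ne_of_mem_of_not_mem hc (Multiset.disjoint_left.mp hdisj hb))]
      exact hiso.node_append_cons l₁ l₂

end PTree

theorem subsingleton_quotient_span_sub_sign_smul {α k : Type*} [Fintype α] [DecidableEq α]
    [Field k] (h2 : (2 : k) ≠ 0) {P : Equiv.Perm α → Prop}
    (hP : ∃ τ, P τ ∧ Equiv.Perm.sign τ = -1) :
    Subsingleton (k ⧸ Submodule.span k {x : k |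
      ∃ (σ : Equiv.Perm α) (c : k), P σ ∧ x = c - ((Equiv.Perm.sign σ : ℤ) • c)}) := by
  obtain ⟨τ, hτ, hsign⟩ := hP
  rw [Submodule.Quotient.subsingleton_iff]
  refine (eq_bot_or_eq_top _).resolve_left ((Submodule.ne_bot_iff _).mpr ⟨2, ?_, h2⟩)
  exact Submodule.subset_span ⟨τ, 1, hτ, by rw [hsign]; norm_num⟩

theorem stmt_15_general (p : ℕ) (hodd : Odd p) (k : Type) [Field k] [CharP k p]
    (T : PTree p) (hlab : T.labels = (Finset.univ : Finset (Fin p)).val)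
    (har : T.arityOK) (hs : 2 ≤ T.internalCount) :
    (∃ a b : Fin p, a ≠ b ∧ TIso p (T.relabel (Equiv.swap a b)) T) ∧
    Subsingleton (k ⧸ Submodule.span k {x : k |
      ∃ (σ : Equiv.Perm (Fin p)) (c : k),
        TIso p (T.relabel σ) T ∧ x = c - ((Equiv.Perm.sign σ : ℤ) • c)}) := by
  have hnd : T.labels.Nodup := hlab ▸ Finset.univ.nodup
  obtain ⟨a, -, b, -, hab, hiso⟩ := T.exists_swap_relabel_tIso hnd har (by omega)
  have h2 : (2 : k) ≠ 0 := Ring.two_ne_zero <| by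
    rw [ringChar.eq k p]
    rintro rfl
    exact Nat.not_odd_iff_even.mpr even_two hodd
  exact ⟨⟨a, b, hab, hiso⟩,
    subsingleton_quotient_span_sub_sign_smul h2 ⟨_, hiso, Equiv.Perm.sign_swap hab⟩⟩

/-- Let `p` be an odd prime and `k` a field of characteristic `p`.  For any rooted tree
`T` with `p` leaves labelled bijectively by `{1, …, p}` and at least `s ≥ 2` internal
vertices (each with at least two children), the stabilizer `Σ_T ⊆ Σ_p` of `T` contains a
transposition; hence the coinvariants `(sgn)_{Σ_T}` of the sign representation of `Σ_T`
on `k` vanish. -/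
theorem stmt_15 (p : ℕ) [Fact p.Prime] (hodd : Odd p) (k : Type) [Field k] [CharP k p]
    (T : PTree p) (hlab : T.labels = (Finset.univ : Finset (Fin p)).val)
    (har : T.arityOK) (hs : 2 ≤ T.internalCount) :
    (∃ a b : Fin p, a ≠ b ∧ TIso p (T.relabel (Equiv.swap a b)) T) ∧
    Subsingleton (k ⧸ Submodule.span k {x : k |
      ∃ (σ : Equiv.Perm (Fin p)) (c : k),
        TIso p (T.relabel σ) T ∧ x = c - ((Equiv.Perm.sign σ : ℤ) • c)}) :=
  stmt_15_general p hodd k T hlab har hs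
end
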